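/- Let U be a finite set with |U| = N, let δ₊, δ₋ : 2^U → [0,1] be monotone set functions, let E(A) = max(δ₊(A), δ₋(A)), fix a threshold τ ∈ (0,1], and let A* = {j ∈ U : E({j}) ≥ τ} be the set of τ-agonists. Let T be a binary splitting tree over U, let (Ω, P) be a probability space, and for each node A of T let Û(A) : Ω → ℝ be a random variable satisfying P(E(A) ≤ Û(A)) ≥ 1 − α_A, where the nonnegative budgets satisfy Σ_{A ∈ T} α_A ≤ α_tot. Consider the hierarchical search over T that prunes a node A if and only if Û(A) < τ. Then with probability at least 1 − α_tot, no node A of T with A ∩ A* ≠ ∅ is pruned, and consequently for every j ∈ A* the singleton leaf {j} is visited by the search. -/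
import Mathlib


open MeasureTheory

/-- A binary splitting tree over a finite set: leaves are singletons and every
internal node's label is partitioned by the labels of its two nonempty children. -/
inductive BST (α : Type) [DecidableEq α] : Finset α → Type where
  | leaf (j : α) : BST α {j}
  | node (A₁ A₂ : Finset α) (h₁ : A₁.Nonempty) (h₂ : A₂.Nonempty)
      (hd : Disjoint A₁ A₂) (t₁ : BST α A₁) (t₂ : BST α A₂) : BST α (A₁ ∪ A₂)

namespace BST

variable {α : Type} [DecidableEq α]

/-- The labels of all nodes of the tree. -/
def nodes : {A : Finset α} → BST α A → Finset (Finset α)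
  | _, .leaf j => {{j}}
  | _, .node A₁ A₂ _ _ _ t₁ t₂ => insert (A₁ ∪ A₂) (t₁.nodes ∪ t₂.nodes)

/-- The labels of the nodes visited by the hierarchical search with pruning
predicate `prune`: at each reached node the predicate is evaluated; if it holds
the subtree is not explored, otherwise the node is visited and the search
recurses into both children. -/
def visited (prune : Finset α → Bool) : {A : Finset α} → BST α A → Finset (Finset α)
  | _, .leaf j => if prune {j} then ∅ else {{j}}
  | _, .node A₁ A₂ _ _ _ t₁ t₂ =>
      if prune (A₁ ∪ A₂) then ∅
      else insert (A₁ ∪ A₂) (t₁.visited prune ∪ t₂.visited prune)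

end BST

lemma BST.visited_of_mem {α : Type} [DecidableEq α] (prune : Finset α → Bool) (j : α) :
    ∀ {A : Finset α} (t : BST α A), j ∈ A →
      (∀ B ∈ t.nodes, j ∈ B → prune B = false) → ({j} : Finset α) ∈ t.visited prune := by
  intro A t
  induction t with
  | leaf j' =>
      intro hj h
      have hjj : j = j' := Finset.mem_singleton.mp hj
      subst hjj
      have hp : prune {j} = false := h {j} (Finset.mem_singleton_self _) (Finset.mem_singleton_self _)
      simp [BST.visited, hp]
  | node A₁ A₂ h₁ h₂ hd t₁ t₂ ih₁ ih₂ =>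
      intro hj h
      have hroot : prune (A₁ ∪ A₂) = false :=
        h _ (Finset.mem_insert_self _ _) hj
      have hmem : ({j} : Finset α) ∈ t₁.visited prune ∪ t₂.visited prune := by
        rcases Finset.mem_union.mp hj with hj1 | hj2
        · exact Finset.mem_union_left _ (ih₁ hj1 (fun B hB hjB =>
            h B (Finset.mem_insert_of_mem (Finset.mem_union_left _ hB)) hjB))
        · exact Finset.mem_union_right _ (ih₂ hj2 (fun B hB hjB =>
            h B (Finset.mem_insert_of_mem (Finset.mem_union_right _ hB)) hjB))
      simp only [BST.visited, hroot, if_false]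
      exact Finset.mem_insert_of_mem hmem

/-- Let `U` be a finite set with `|U| = N`, `δ₊ δ₋ : 2^U → [0,1]`
monotone set functions, `E A = max (δ₊ A) (δ₋ A)`, `τ ∈ (0,1]`, and
`A* = {j ∈ U : E {j} ≥ τ}` the set of τ-agonists. Let `T` be a binary splitting
tree over `U`, `(Ω, P)` a probability space, and for each node `A` of `T` let
`Û A : Ω → ℝ` be a random variable with `P(E A ≤ Û A) ≥ 1 − α_A`, where the
nonnegative budgets satisfy `Σ_{A ∈ T} α_A ≤ α_tot`. The hierarchical search
prunes a node `A` iff `Û A < τ`. Then with probability at least `1 − α_tot`,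
no node `A` of `T` with `A ∩ A* ≠ ∅` is pruned, and consequently every
singleton leaf `{j}` with `j ∈ A*` is visited by the search. -/
theorem pruning_safety
    {α : Type} [DecidableEq α] {U : Finset α} (N : ℕ) (hN : U.card = N)
    (T : BST α U)
    (δp δm : Finset α → ℝ)
    (hδp01 : ∀ A : Finset α, δp A ∈ Set.Icc (0 : ℝ) 1)
    (hδm01 : ∀ A : Finset α, δm A ∈ Set.Icc (0 : ℝ) 1)
    (hδpmono : ∀ A B : Finset α, A ⊆ B → δp A ≤ δp B)
    (hδmmono : ∀ A B : Finset α, A ⊆ B → δm A ≤ δm B)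
    (E : Finset α → ℝ) (hE : ∀ A : Finset α, E A = max (δp A) (δm A))
    (τ : ℝ) (hτ : τ ∈ Set.Ioc (0 : ℝ) 1)
    (Astar : Finset α) (hAstar : ∀ j : α, j ∈ Astar ↔ j ∈ U ∧ τ ≤ E {j})
    {Ω : Type} [MeasurableSpace Ω] (P : Measure Ω) [IsProbabilityMeasure P]
    (Uhat : Finset α → Ω → ℝ) (hUhatMeas : ∀ A : Finset α, Measurable (Uhat A))
    (αb : Finset α → ℝ) (hαb : ∀ A : Finset α, 0 ≤ αb A)
    (αtot : ℝ) (hsum : ∑ A ∈ T.nodes, αb A ≤ αtot)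
    (hUCB : ∀ A ∈ T.nodes, 1 - ENNReal.ofReal (αb A) ≤ P {ω | E A ≤ Uhat A ω})
    (prune : Ω → Finset α → Bool)
    (hprune : ∀ (ω : Ω) (A : Finset α), prune ω A = true ↔ Uhat A ω < τ) :
    1 - ENNReal.ofReal αtot ≤
      P {ω | (∀ A ∈ T.nodes, (A ∩ Astar).Nonempty → prune ω A = false) ∧
             (∀ j ∈ Astar, ({j} : Finset α) ∈ T.visited (prune ω))} := by
  classical
  set S := T.nodes with hS
  set G : Finset α → Set Ω := fun A => {ω | E A ≤ Uhat A ω} with hG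
  have hGmeas : ∀ A, MeasurableSet (G A) := fun A =>
    measurableSet_le measurable_const (hUhatMeas A)
  -- the good event
  have hsub : (⋂ A ∈ S, G A) ⊆
      {ω | (∀ A ∈ T.nodes, (A ∩ Astar).Nonempty → prune ω A = false) ∧
           (∀ j ∈ Astar, ({j} : Finset α) ∈ T.visited (prune ω))} := by
    intro ω hω
    have hωG : ∀ A ∈ S, E A ≤ Uhat A ω := by
      intro A hA
      exact Set.mem_iInter₂.mp hω A hA
    have hEmono : ∀ A B : Finset α, A ⊆ B → E A ≤ E B := by
      intro A B hAB
      rw [hE, hE]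
      exact max_le_max (hδpmono A B hAB) (hδmmono A B hAB)
    have hnoprune : ∀ A ∈ T.nodes, (A ∩ Astar).Nonempty → prune ω A = false := by
      intro A hA ⟨j, hj⟩
      have hjA : j ∈ A := (Finset.mem_inter.mp hj).1
      have hjAs : j ∈ Astar := (Finset.mem_inter.mp hj).2
      have hτE : τ ≤ E {j} := ((hAstar j).mp hjAs).2
      have h1 : τ ≤ Uhat A ω :=
        le_trans hτE (le_trans (hEmono {j} A (Finset.singleton_subset_iff.mpr hjA)) (hωG A hA))
      rw [← Bool.not_eq_true, hprune]
      exact not_lt.mpr h1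
    refine ⟨hnoprune, ?_⟩
    intro j hj
    have hjU : j ∈ U := ((hAstar j).mp hj).1
    refine BST.visited_of_mem (prune ω) j T hjU ?_
    intro B hB hjB
    exact hnoprune B hB ⟨j, Finset.mem_inter.mpr ⟨hjB, hj⟩⟩
  refine le_trans ?_ (measure_mono hsub)
  have hstep : ∀ A ∈ S, P (G A)ᶜ ≤ ENNReal.ofReal (αb A) := by
    intro A hA
    rw [prob_compl_eq_one_sub (hGmeas A), tsub_le_iff_right]
    have h := tsub_le_iff_right.mp (hUCB A hA)
    rwa [add_comm]
  have hcompl : P ((⋂ A ∈ S, G A)ᶜ) ≤ ENNReal.ofReal αtot := by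
    rw [Set.compl_iInter₂]
    refine le_trans (measure_biUnion_finset_le S _) ?_
    refine le_trans (Finset.sum_le_sum hstep) ?_
    rw [← ENNReal.ofReal_sum_of_nonneg (fun A _ => hαb A)]
    exact ENNReal.ofReal_le_ofReal hsum
  have hmeas : MeasurableSet (⋂ A ∈ S, G A) :=
    MeasurableSet.biInter S.countable_toSet (fun A _ => hGmeas A)
  have h1 : 1 - ENNReal.ofReal αtot ≤ 1 - P ((⋂ A ∈ S, G A)ᶜ) :=
    tsub_le_tsub_left hcompl 1
  rwa [← prob_compl_eq_one_sub hmeas.compl, compl_compl] at h1
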